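/- arXiv:1104.3469 — 5 statements merged into one kernel-verified Lean document; each statement's English description precedes it below -/
import Mathlib

section
/- Let K, J, I be finite types, b : K → J → Bool, u : K → J → ℝ, a : J → I → Bool, t : J → I → ℝ, and p : I → ℝ. Suppose the method dependency matrix a is a partial matching: every row of a contains exactly one true entry, and every column of a contains at most one true entry. Then applying the probabilistic adaptation operator twice agrees with applying the composed probabilistic adaptation factor: for all k : K, ((b,u) ⊗ ((a,t) ⊗ p)) k = (((b,u) ⊗ (a,t)) ⊗ p) k. -/
/-- Probabilistic adaptation operator:
`((a,t) ⊗ p) j = ∏_{i with a j i = true} (t j i * p i)`. -/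
noncomputable def probAdapt {J I : Type*} [Fintype I]
    (a : J → I → Bool) (t : J → I → ℝ) (p : I → ℝ) (j : J) : ℝ :=
  ∏ i ∈ Finset.univ.filter (fun i => a j i = true), (t j i * p i)

/-- Real part of the probabilistic composition of `(b,u)` and `(a,t)`:
`v k i = ∏_{j with b k j = true and a j i = true} (u k j * t j i)`. -/
noncomputable def probCompMat {K J I : Type*} [Fintype J]
    (b : K → J → Bool) (u : K → J → ℝ) (a : J → I → Bool) (t : J → I → ℝ)
    (k : K) (i : I) : ℝ :=
  ∏ j ∈ Finset.univ.filter (fun j => b k j = true ∧ a j i = true), (u k j * t j i)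

/-- Boolean part of the probabilistic composition of `(b,u)` and `(a,t)`. -/
def boolComp {K J I : Type*} [Fintype J]
    (b : K → J → Bool) (a : J → I → Bool) (k : K) (i : I) : Bool :=
  decide (∃ j, b k j = true ∧ a j i = true)

theorem probAdapt_comp_of_partial_matching {K J I : Type*}
    [Fintype K] [Fintype J] [Fintype I]
    (b : K → J → Bool) (u : K → J → ℝ)
    (a : J → I → Bool) (t : J → I → ℝ) (p : I → ℝ)
    (hrow : ∀ j : J, ∃! i : I, a j i = true)
    (hcol : ∀ (i : I) (j j' : J), a j i = true → a j' i = true → j = j') :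
    ∀ k : K,
      probAdapt b u (probAdapt a t p) k
        = probAdapt (boolComp b a) (probCompMat b u a t) p k := by
  intro k
  classical
  set f : J → I := fun j => (hrow j).choose with hf
  have haf : ∀ j, a j (f j) = true := fun j => (hrow j).choose_spec.1
  have huniq : ∀ j i, a j i = true → i = f j := fun j i h => (hrow j).choose_spec.2 i h
  have hinj : Function.Injective f := fun j j' h => by
    have := haf j'
    rw [← h] at this
    exact hcol (f j) j j' (haf j) this
  -- row product is a single factor
  have hsingle : ∀ j, probAdapt a t p j = t j (f j) * p (f j) := by
    intro j
    unfold probAdapt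
    have : Finset.univ.filter (fun i => a j i = true) = {f j} := by
      ext i
      simp only [Finset.mem_filter, Finset.mem_univ, true_and, Finset.mem_singleton]
      exact ⟨huniq j i, fun h => h ▸ haf j⟩
    rw [this, Finset.prod_singleton]
  -- the composed filter set is the image of the b-filter set under f
  have himg : Finset.univ.filter (fun i => boolComp b a k i = true)
      = (Finset.univ.filter (fun j => b k j = true)).image f := by
    ext i
    simp only [Finset.mem_filter, Finset.mem_univ, true_and, Finset.mem_image, boolComp,
      decide_eq_true_eq]
    constructor
    · rintro ⟨j, hbj, haj⟩
      exact ⟨j, hbj, (huniq j i haj).symm⟩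
    · rintro ⟨j, hbj, rfl⟩
      exact ⟨j, hbj, haf j⟩
  have hcomp : ∀ j, probCompMat b u a t k (f j) = if b k j = true then u k j * t j (f j) else 1 := by
    intro j
    unfold probCompMat
    have hset : Finset.univ.filter (fun j' => b k j' = true ∧ a j' (f j) = true)
        = if b k j = true then {j} else ∅ := by
      split_ifs with hb
      · ext j'
        simp only [Finset.mem_filter, Finset.mem_univ, true_and, Finset.mem_singleton]
        constructor
        · rintro ⟨_, ha'⟩
          exact hcol (f j) j' j ha' (haf j)
        · rintro rfl; exact ⟨hb, haf _⟩
      · ext j'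
        simp only [Finset.mem_filter, Finset.mem_univ, true_and, Finset.notMem_empty,
          iff_false, not_and]
        intro hb' ha'
        exact hb (hcol (f j) j' j ha' (haf j) ▸ hb')
    rw [hset]
    split_ifs with hb
    · rw [Finset.prod_singleton]
    · rw [Finset.prod_empty]
  conv_lhs => rw [probAdapt]
  conv_rhs => rw [probAdapt]
  rw [himg, Finset.prod_image (fun x _ y _ h => hinj h)]
  apply Finset.prod_congr rfl
  intro j hj
  have hb : b k j = true := (Finset.mem_filter.1 hj).2
  rw [hsingle j, hcomp j, if_pos hb]
  ring
end

section
/- Let K, J, I be finite types, b : K → J → Bool, u : K → J → ℝ, a : J → I → Bool, t : J → I → ℝ, and p : I → ℝ. Suppose all entries of u, t, and p lie in {0, 1}, and every row of a contains at least one true entry. Then for all k : K, ((b,u) ⊗ ((a,t) ⊗ p)) k = (((b,u) ⊗ (a,t)) ⊗ p) k, where the left-hand side applies the probabilistic adaptation operator twice and the right-hand side applies the probabilistic adaptation operator for the probabilistic composition of (b,u) and (a,t). -/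
namespace Finset

variable {α β M : Type*} [CommMonoid M]

theorem prod_prod_const_of_isIdempotentElem {s : Finset α} {t : α → Finset β} {f : α → M}
    (hf : ∀ x ∈ s, IsIdempotentElem (f x)) (ht : ∀ x ∈ s, (t x).Nonempty) :
    ∏ x ∈ s, ∏ _y ∈ t x, f x = ∏ x ∈ s, f x :=
  prod_congr rfl fun x hx => by
    rw [prod_const, (hf x hx).pow_eq (ht x hx).card_ne_zero]

end Finset

open Finset

theorem probAdapt_comp_of_zero_one_entries_general {K J I : Type*}
    [Fintype J] [Fintype I]
    (b : K → J → Bool) (u : K → J → ℝ)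
    (a : J → I → Bool) (t : J → I → ℝ) (p : I → ℝ)
    (hu : ∀ (k : K) (j : J), u k j = 0 ∨ u k j = 1)
    (hp : ∀ i : I, p i = 0 ∨ p i = 1)
    (hrow : ∀ j : J, ∃ i : I, a j i = true) :
    ∀ k : K,
      probAdapt b u (probAdapt a t p) k
        = probAdapt (boolComp b a) (probCompMat b u a t) p k := by
  intro k
  set B := univ.filter fun j => b k j = true
  set A := fun j => univ.filter fun i => a j i = true
  set U := univ.filter fun i => boolComp b a k i = true
  set BA := fun i => univ.filter fun j => b k j = true ∧ a j i = true
  have hswap (F : J → I → ℝ) : ∏ j ∈ B, ∏ i ∈ A j, F j i = ∏ i ∈ U, ∏ j ∈ BA i, F j i :=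
    prod_comm' fun j i => by
      simp only [B, A, U, BA, boolComp, mem_filter, mem_univ, true_and, decide_eq_true_eq]
      exact ⟨fun h => ⟨h, j, h⟩, And.left⟩
  have hu' : ∀ j ∈ B, IsIdempotentElem (u k j) :=
    fun j _ => IsIdempotentElem.iff_eq_zero_or_one.2 (hu k j)
  have hp' : ∀ i ∈ U, IsIdempotentElem (p i) :=
    fun i _ => IsIdempotentElem.iff_eq_zero_or_one.2 (hp i)
  have hA : ∀ j ∈ B, (A j).Nonempty := fun j _ => by simpa [A, Finset.Nonempty] using hrow j
  have hBA : ∀ i ∈ U, (BA i).Nonempty := fun i hi => by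
    simpa [U, BA, boolComp, Finset.Nonempty] using hi
  calc probAdapt b u (probAdapt a t p) k
      = (∏ j ∈ B, u k j) * (∏ j ∈ B, ∏ i ∈ A j, t j i) * ∏ j ∈ B, ∏ i ∈ A j, p i := by
        simp only [probAdapt, prod_mul_distrib, mul_assoc]; rfl
    _ = (∏ j ∈ B, ∏ _i ∈ A j, u k j) * (∏ j ∈ B, ∏ i ∈ A j, t j i) *
          ∏ j ∈ B, ∏ i ∈ A j, p i := by
        rw [prod_prod_const_of_isIdempotentElem hu' hA]
    _ = (∏ i ∈ U, ∏ j ∈ BA i, u k j) * (∏ i ∈ U, ∏ j ∈ BA i, t j i) *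
          ∏ i ∈ U, ∏ _j ∈ BA i, p i := by
        rw [hswap, hswap, hswap]
    _ = (∏ i ∈ U, ∏ j ∈ BA i, u k j) * (∏ i ∈ U, ∏ j ∈ BA i, t j i) * ∏ i ∈ U, p i := by
        rw [prod_prod_const_of_isIdempotentElem hp' hBA]
    _ = probAdapt (boolComp b a) (probCompMat b u a t) p k := by
        simp only [probAdapt, probCompMat, prod_mul_distrib]; rfl

theorem probAdapt_comp_of_zero_one_entries {K J I : Type*}
    [Fintype K] [Fintype J] [Fintype I]
    (b : K → J → Bool) (u : K → J → ℝ)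
    (a : J → I → Bool) (t : J → I → ℝ) (p : I → ℝ)
    (hu : ∀ (k : K) (j : J), u k j = 0 ∨ u k j = 1)
    (ht : ∀ (j : J) (i : I), t j i = 0 ∨ t j i = 1)
    (hp : ∀ i : I, p i = 0 ∨ p i = 1)
    (hrow : ∀ j : J, ∃ i : I, a j i = true) :
    ∀ k : K,
      probAdapt b u (probAdapt a t p) k
        = probAdapt (boolComp b a) (probCompMat b u a t) p k :=
  probAdapt_comp_of_zero_one_entries_general b u a t p hu hp hrow
end

section
/- Let L, K, J, I be finite types, and let (c,v), (b,u), (a,t) be probabilistic adaptation factors with c : L → K → Bool, v : L → K → ℝ, b : K → J → Bool, u : K → J → ℝ, a : J → I → Bool, t : J → I → ℝ. Suppose every column of a contains at most one true entry and every column of b contains at most one true entry. Then composition of probabilistic adaptation factors is associative: (c,v) ⊗ ((b,u) ⊗ (a,t)) = ((c,v) ⊗ (b,u)) ⊗ (a,t), i.e., both the Boolean first components and the real second components agree entrywise. -/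
/-!
Both sides of the real identity are products of `v l k * u k j * t j i` over the triples with
`c l k`, `b k j` and `a j i` true, regrouped once by `k` and once by `j`. Column uniqueness of `a`
(resp. `b`) makes each inner group on the left (resp. right) a single factor, so the outer factor
`v l k` (resp. `t j i`) can be pushed into it without being repeated.
-/

open Finset

theorem boolComp_assoc {L K J I : Type*} [Fintype K] [Fintype J]
    (c : L → K → Bool) (b : K → J → Bool) (a : J → I → Bool) (l : L) (i : I) :
    boolComp c (boolComp b a) l i = boolComp (boolComp c b) a l i := by
  simp only [boolComp, decide_eq_true_eq, decide_eq_decide]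
  grind

namespace Finset

variable {α β M : Type*} [CommMonoid M]

theorem prod_mul_prod_eq_prod_prod_mul_of_card_eq_one {s : Finset α} {g : α → Finset β}
    (hg : ∀ x ∈ s, #(g x) = 1) (f : α → M) (h : α → β → M) :
    ∏ x ∈ s, (f x * ∏ y ∈ g x, h x y) = ∏ x ∈ s, ∏ y ∈ g x, (f x * h x y) := by
  refine prod_congr rfl fun x hx => ?_
  rw [prod_mul_distrib, prod_const, hg x hx, pow_one]

theorem prod_prod_mul_eq_prod_prod_mul_of_card_eq_one {s : Finset α} {g : α → Finset β}
    (hg : ∀ x ∈ s, #(g x) = 1) (f : α → M) (h : α → β → M) :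
    ∏ x ∈ s, ((∏ y ∈ g x, h x y) * f x) = ∏ x ∈ s, ∏ y ∈ g x, (h x y * f x) := by
  simp_rw [mul_comm _ (f _)]
  exact prod_mul_prod_eq_prod_prod_mul_of_card_eq_one hg f h

end Finset

theorem card_filter_univ_eq_one_of_exists_of_unique {α : Type*} [Fintype α] {p : α → Prop}
    [DecidablePred p] (hex : ∃ x, p x) (huniq : ∀ x y, p x → p y → x = y) :
    #(univ.filter p) = 1 := by
  obtain ⟨x, hx⟩ := hex
  exact card_eq_one_iff_existsUnique.2
    ⟨x, by simpa using hx, fun y hy => huniq y x (by simpa using hy) hx⟩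

theorem probCompMat_assoc {L K J I : Type*} [Fintype K] [Fintype J]
    (c : L → K → Bool) (v : L → K → ℝ) (b : K → J → Bool) (u : K → J → ℝ)
    (a : J → I → Bool) (t : J → I → ℝ)
    (hcola : ∀ (i : I) (j j' : J), a j i = true → a j' i = true → j = j')
    (hcolb : ∀ (j : J) (k k' : K), b k j = true → b k' j = true → k = k') (l : L) (i : I) :
    probCompMat c v (boolComp b a) (probCompMat b u a t) l i
      = probCompMat (boolComp c b) (probCompMat c v b u) a t l i := by
  unfold probCompMat
  rw [prod_mul_prod_eq_prod_prod_mul_of_card_eq_one, prod_prod_mul_eq_prod_prod_mul_of_card_eq_one]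
  · simp_rw [← mul_assoc]
    refine prod_comm' fun k j => ?_
    simp only [mem_filter, mem_univ, true_and, boolComp, decide_eq_true_eq]
    grind
  · intro j hj
    simp only [mem_filter, mem_univ, true_and, boolComp, decide_eq_true_eq] at hj
    exact card_filter_univ_eq_one_of_exists_of_unique hj.1 fun k k' hk hk' => hcolb j k k' hk.2 hk'.2
  · intro k hk
    simp only [mem_filter, mem_univ, true_and, boolComp, decide_eq_true_eq] at hk
    exact card_filter_univ_eq_one_of_exists_of_unique hk.2 fun j j' hj hj' => hcola i j j' hj.2 hj'.2

theorem probComp_assoc_of_col_matching_general {L K J I : Type*}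
    [Fintype K] [Fintype J]
    (c : L → K → Bool) (v : L → K → ℝ)
    (b : K → J → Bool) (u : K → J → ℝ)
    (a : J → I → Bool) (t : J → I → ℝ)
    (hcola : ∀ (i : I) (j j' : J), a j i = true → a j' i = true → j = j')
    (hcolb : ∀ (j : J) (k k' : K), b k j = true → b k' j = true → k = k') :
    (∀ (l : L) (i : I),
        boolComp c (boolComp b a) l i = boolComp (boolComp c b) a l i) ∧
    (∀ (l : L) (i : I),
        probCompMat c v (boolComp b a) (probCompMat b u a t) l i
          = probCompMat (boolComp c b) (probCompMat c v b u) a t l i) :=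
  ⟨boolComp_assoc c b a, probCompMat_assoc c v b u a t hcola hcolb⟩

theorem probComp_assoc_of_col_matching {L K J I : Type*}
    [Fintype L] [Fintype K] [Fintype J] [Fintype I]
    (c : L → K → Bool) (v : L → K → ℝ)
    (b : K → J → Bool) (u : K → J → ℝ)
    (a : J → I → Bool) (t : J → I → ℝ)
    (hcola : ∀ (i : I) (j j' : J), a j i = true → a j' i = true → j = j')
    (hcolb : ∀ (j : J) (k k' : K), b k j = true → b k' j = true → k = k') :
    (∀ (l : L) (i : I),
        boolComp c (boolComp b a) l i = boolComp (boolComp c b) a l i) ∧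
    (∀ (l : L) (i : I),
        probCompMat c v (boolComp b a) (probCompMat b u a t) l i
          = probCompMat (boolComp c b) (probCompMat c v b u) a t l i) :=
  probComp_assoc_of_col_matching_general c v b u a t hcola hcolb
end

section
/- Monotonicity of adaptation loss along a chain: let K, J, I be finite types with distinguished dummy elements j₀ : J and i₀ : I. Let b : K → J → Bool, u : K → J → ℝ, a : J → I → Bool, t : J → I → ℝ, where all entries of u and t lie in the interval [0,1] and a j₀ i₀ = true. Let e : I → ℝ be the vector with e i₀ = 0 and e i = 1 for i ≠ i₀, and let e' : J → ℝ be the vector with e' j₀ = 0 and e' j = 1 for j ≠ j₀. Then extending the chain cannot increase availability: for every k : K, ((b,u) ⊗ ((a,t) ⊗ e)) k ≤ ((b,u) ⊗ e') k. -/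
section probAdapt

variable {J I : Type*} [Fintype I] {a : J → I → Bool} {t : J → I → ℝ} {p q : I → ℝ}

theorem probAdapt_nonneg (ht : ∀ j i, 0 ≤ t j i) (hp : 0 ≤ p) (j : J) :
    0 ≤ probAdapt a t p j :=
  Finset.prod_nonneg fun i _ => mul_nonneg (ht j i) (hp i)

theorem probAdapt_le_one (ht : ∀ j i, t j i ∈ Set.Icc (0 : ℝ) 1)
    (hp : ∀ i, p i ∈ Set.Icc (0 : ℝ) 1) (j : J) : probAdapt a t p j ≤ 1 :=
  Finset.prod_le_one (fun i _ => mul_nonneg (ht j i).1 (hp i).1)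
    fun i _ => mul_le_one₀ (ht j i).2 (hp i).1 (hp i).2

theorem probAdapt_eq_zero {j : J} {i : I} (ha : a j i = true) (hp : p i = 0) :
    probAdapt a t p j = 0 :=
  Finset.prod_eq_zero (i := i) (by simp [ha]) (by simp [hp])

theorem probAdapt_mono (ht : ∀ j i, 0 ≤ t j i) (hp : 0 ≤ p) (hpq : p ≤ q) :
    probAdapt a t p ≤ probAdapt a t q := fun j =>
  Finset.prod_le_prod (fun i _ => mul_nonneg (ht j i) (hp i))
    fun i _ => mul_le_mul_of_nonneg_left (hpq i) (ht j i)

end probAdapt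

theorem mem_Icc_of_eq_zero_or_one {I : Type*} {i₀ : I} {e : I → ℝ} (he₀ : e i₀ = 0)
    (he : ∀ i : I, i ≠ i₀ → e i = 1) (i : I) : e i ∈ Set.Icc (0 : ℝ) 1 := by
  rcases eq_or_ne i i₀ with rfl | hi
  · simp [he₀]
  · simp [he i hi]

theorem probAdapt_chain_monotone {K J I : Type*}
    [Fintype K] [Fintype J] [Fintype I]
    (j₀ : J) (i₀ : I)
    (b : K → J → Bool) (u : K → J → ℝ)
    (a : J → I → Bool) (t : J → I → ℝ)
    (hu : ∀ (k : K) (j : J), u k j ∈ Set.Icc (0 : ℝ) 1)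
    (ht : ∀ (j : J) (i : I), t j i ∈ Set.Icc (0 : ℝ) 1)
    (ha : a j₀ i₀ = true)
    (e : I → ℝ) (he₀ : e i₀ = 0) (he : ∀ i : I, i ≠ i₀ → e i = 1)
    (e' : J → ℝ) (he'₀ : e' j₀ = 0) (he' : ∀ j : J, j ≠ j₀ → e' j = 1) :
    ∀ k : K, probAdapt b u (probAdapt a t e) k ≤ probAdapt b u e' k := by
  have he01 := mem_Icc_of_eq_zero_or_one he₀ he
  have hinner : probAdapt a t e ≤ e' := by
    intro j
    rcases eq_or_ne j j₀ with rfl | hj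
    · rw [probAdapt_eq_zero ha he₀, he'₀]
    · rw [he' j hj]
      exact probAdapt_le_one ht he01 j
  exact probAdapt_mono (fun k j => (hu k j).1)
    (probAdapt_nonneg (fun j i => (ht j i).1) fun i => (he01 i).1) hinner
end

section
/- Weighted availability decreases along a chain: let K, J, I be finite types with distinguished dummy elements j₀ : J and i₀ : I. Let b : K → J → Bool, u : K → J → ℝ, a : J → I → Bool, t : J → I → ℝ, where all entries of u and t lie in [0,1] and a j₀ i₀ = true. Let e : I → ℝ have e i₀ = 0 and e i = 1 for i ≠ i₀, and e' : J → ℝ have e' j₀ = 0 and e' j = 1 for j ≠ j₀. Let r : K → ℝ be nonnegative weights. Then ∑_{k} r k * ((b,u) ⊗ ((a,t) ⊗ e)) k ≤ ∑_{k} r k * ((b,u) ⊗ e') k. -/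
namespace probAdapt

variable {J I : Type*} [Fintype I] {a : J → I → Bool} {t : J → I → ℝ} {p q : I → ℝ}

theorem nonneg (ht : 0 ≤ t) (hp : 0 ≤ p) : 0 ≤ probAdapt a t p := fun j =>
  Finset.prod_nonneg fun i _ => mul_nonneg (ht j i) (hp i)

theorem mono (ht : 0 ≤ t) (hp : 0 ≤ p) (hpq : p ≤ q) : probAdapt a t p ≤ probAdapt a t q :=
  fun j => Finset.prod_le_prod (fun i _ => mul_nonneg (ht j i) (hp i))
    fun i _ => mul_le_mul_of_nonneg_left (hpq i) (ht j i)

theorem le_one (ht₀ : 0 ≤ t) (ht₁ : t ≤ 1) (hp₀ : 0 ≤ p) (hp₁ : p ≤ 1) (j : J) :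
    probAdapt a t p j ≤ 1 :=
  Finset.prod_le_one (fun i _ => mul_nonneg (ht₀ j i) (hp₀ i))
    fun i _ => mul_le_one₀ (ht₁ j i) (hp₀ i) (hp₁ i)

theorem eq_zero_of_apply_eq_zero {j : J} {i : I} (ha : a j i = true) (hp : p i = 0) :
    probAdapt a t p j = 0 :=
  Finset.prod_eq_zero (i := i) (by simp [ha]) (by rw [hp, mul_zero])

end probAdapt

theorem weighted_availability_chain_monotone {K J I : Type*}
    [Fintype K] [Fintype J] [Fintype I]
    (j₀ : J) (i₀ : I)
    (b : K → J → Bool) (u : K → J → ℝ)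
    (a : J → I → Bool) (t : J → I → ℝ)
    (hu : ∀ (k : K) (j : J), u k j ∈ Set.Icc (0 : ℝ) 1)
    (ht : ∀ (j : J) (i : I), t j i ∈ Set.Icc (0 : ℝ) 1)
    (ha : a j₀ i₀ = true)
    (e : I → ℝ) (he₀ : e i₀ = 0) (he : ∀ i : I, i ≠ i₀ → e i = 1)
    (e' : J → ℝ) (he'₀ : e' j₀ = 0) (he' : ∀ j : J, j ≠ j₀ → e' j = 1)
    (r : K → ℝ) (hr : ∀ k : K, 0 ≤ r k) :
    ∑ k : K, r k * probAdapt b u (probAdapt a t e) k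
      ≤ ∑ k : K, r k * probAdapt b u e' k := by
  have hu₀ : 0 ≤ u := fun k j => (hu k j).1
  have ht₀ : 0 ≤ t := fun j i => (ht j i).1
  have ht₁ : t ≤ 1 := fun j i => (ht j i).2
  have he_mem : ∀ i, e i ∈ Set.Icc (0 : ℝ) 1 := fun i => by
    rcases eq_or_ne i i₀ with rfl | hi
    · simp [he₀]
    · simp [he i hi]
  have he_nonneg : 0 ≤ e := fun i => (he_mem i).1
  have hle : probAdapt a t e ≤ e' := fun j => by
    rcases eq_or_ne j j₀ with rfl | hj
    · rw [he'₀, probAdapt.eq_zero_of_apply_eq_zero ha he₀]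
    · rw [he' j hj]
      exact probAdapt.le_one ht₀ ht₁ he_nonneg (fun i => (he_mem i).2) j
  have hchain : probAdapt b u (probAdapt a t e) ≤ probAdapt b u e' :=
    probAdapt.mono hu₀ (probAdapt.nonneg ht₀ he_nonneg) hle
  exact Finset.sum_le_sum fun k _ => mul_le_mul_of_nonneg_left (hchain k) (hr k)
end
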